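/- arXiv:2210.09437 — 2 statements merged into one kernel-verified Lean document; each statement's English description precedes it below -/
import Mathlib

section
/- Let d ≥ 2 and v, w ∈ S^{d-1}. Define the distribution φ_v by ⟨φ_v, f⟩ = ∫_0^∞ t f(tv) dt, and set π^{jk} = ∂_l φ_v (v^j v^l w^k + v^l v^k w^j − w^l v^k v^j) (a symmetric-2-tensor-valued distribution). Then π satisfies the symmetric divergence equation ∂_j π^{jk} = δ_0 w^k in the sense of distributions. -/
open MeasureTheory

/-- For unit vectors `v, w`, with `⟨φ_v, f⟩ = ∫_0^∞ t f(tv) dt` and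
`π^{jk} = ∂_l φ_v (v^j v^l w^k + v^l v^k w^j − w^l v^k v^j)`, the tensor `π` is symmetric
and satisfies `∂_j π^{jk} = δ_0 w^k` in the sense of distributions, i.e. (after two
integrations by parts) `∑_{j,l} c^{jlk} ∫_0^∞ t ∂_l ∂_j f(tv) dt = w^k f(0)` for every
test function `f`. -/
theorem symmetric_divergence_fundamental_solution_ray
    (d : ℕ) (hd : 2 ≤ d) (v w : EuclideanSpace ℝ (Fin d)) (hv : ‖v‖ = 1) (hw : ‖w‖ = 1)
    (c : Fin d → Fin d → Fin d → ℝ)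
    (hc : c = fun j l k => v j * v l * w k + v l * v k * w j - w l * v k * v j) :
    (∀ j l k, c j l k = c k l j) ∧
    ∀ f : EuclideanSpace ℝ (Fin d) → ℝ, ContDiff ℝ (⊤ : ℕ∞) f → HasCompactSupport f →
      ∀ k : Fin d,
        ∑ j : Fin d, ∑ l : Fin d, c j l k *
          ∫ t in Set.Ioi (0:ℝ), t *
            fderiv ℝ (fun y => fderiv ℝ f y (EuclideanSpace.single j 1)) (t • v)
              (EuclideanSpace.single l 1)
        = w k * f 0 := by
  subst hc
  refine ⟨fun j l k => by ring, ?_⟩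
  intro f hf hsupp k
  classical
  have hdiff : Differentiable ℝ f := hf.differentiable (by simp)
  have hf' : ContDiff ℝ (⊤ : ℕ∞) (fderiv ℝ f) := hf.fderiv_right (by simp)
  have hdF : Differentiable ℝ (fderiv ℝ f) := hf'.differentiable (by simp)
  -- B is the second derivative
  set B := fderiv ℝ (fderiv ℝ f) with hB
  have hBsymm : ∀ (x u u' : EuclideanSpace ℝ (Fin d)), B x u u' = B x u' u := fun x u u' =>
    second_derivative_symmetric (fun y => (hdiff y).hasFDerivAt) ((hdF x).hasFDerivAt) u u'
  -- rewriting the iterated derivative through B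
  have hDeq : ∀ (u u' x : EuclideanSpace ℝ (Fin d)),
      fderiv ℝ (fun y => fderiv ℝ f y u) x u' = B x u' u := by
    intro u u' x
    rw [fderiv_clm_apply (hdF x) (differentiableAt_const u)]
    simp [hB]
  simp only [hDeq]
  -- the standard basis representation
  have hrep : v = ∑ i, v i • EuclideanSpace.single i 1 := by
    have := (EuclideanSpace.basisFun (Fin d) ℝ).toBasis.sum_repr v
    simpa [EuclideanSpace.basisFun_apply] using this.symm
  -- support radius
  obtain ⟨R, hR0, hR⟩ := hsupp.isCompact.isBounded.subset_closedBall_lt 0 0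
  have hout : ∀ t : ℝ, R < |t| → (t • v) ∉ tsupport f := by
    intro t ht hmem
    have h1 : ‖t • v‖ ≤ R := by simpa using hR hmem
    rw [norm_smul, hv, mul_one, Real.norm_eq_abs] at h1
    linarith
  have houtf : ∀ t : ℝ, R < |t| → f (t • v) = 0 := fun t ht =>
    image_eq_zero_of_notMem_tsupport (hout t ht)
  have htsub : tsupport (fderiv ℝ f) ⊆ tsupport f :=
    closure_minimal (support_fderiv_subset ℝ) (isClosed_tsupport f)
  have hout1 : ∀ t : ℝ, R < |t| → fderiv ℝ f (t • v) = 0 := by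
    intro t ht
    by_contra h
    exact hout t ht (support_fderiv_subset ℝ (by simpa using h))
  have hout2 : ∀ t : ℝ, R < |t| → B (t • v) = 0 := by
    intro t ht
    by_contra h
    have h1 : (t • v) ∈ tsupport (fderiv ℝ f) :=
      support_fderiv_subset ℝ (by simpa [hB] using h)
    exact hout t ht (htsub h1)
  -- continuity facts
  have hcB : Continuous B := hf'.continuous_fderiv (by simp)
  have hcline : Continuous (fun t : ℝ => t • v) := continuous_id.smul continuous_const
  have hcD : ∀ u u' : EuclideanSpace ℝ (Fin d), Continuous (fun t : ℝ => B (t • v) u u') := by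
    intro u u'
    exact ((hcB.comp hcline).clm_apply continuous_const).clm_apply continuous_const
  -- integrability of each summand
  have hint : ∀ u u' : EuclideanSpace ℝ (Fin d), IntegrableOn (fun t : ℝ => t * B (t • v) u u') (Set.Ioi 0) := by
    intro u u'
    have hcphi : Continuous (fun t : ℝ => t * B (t • v) u u') :=
      continuous_id.mul (hcD u u')
    have hcs : HasCompactSupport (fun t : ℝ => t * B (t • v) u u') := by
      apply HasCompactSupport.intro (isCompact_Icc (a := -(R+1)) (b := R+1))
      intro t ht
      have habs : R < |t| := by
        simp only [Set.mem_Icc, not_and_or, not_le] at ht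
        rcases ht with h | h
        · rw [abs_of_neg (by linarith)]; linarith
        · rw [abs_of_pos (by linarith)]; linarith
      rw [hout2 t habs]; simp
    exact (hcphi.integrable_of_hasCompactSupport hcs).integrableOn
  -- bilinear expansion
  have hLvv : ∀ L : EuclideanSpace ℝ (Fin d) →L[ℝ] EuclideanSpace ℝ (Fin d) →L[ℝ] ℝ,
      L v v = ∑ j : Fin d, ∑ l : Fin d,
        v j * v l * L (EuclideanSpace.single l 1) (EuclideanSpace.single j 1) := by
    intro L
    have h1 : ∀ y : EuclideanSpace ℝ (Fin d),
        L y v = ∑ b, v b * L y (EuclideanSpace.single b 1) := by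
      intro y
      conv_lhs => rw [hrep]
      rw [map_sum]
      exact Finset.sum_congr rfl fun b _ => by rw [(L y).map_smul, smul_eq_mul]
    have h2 : ∀ u : EuclideanSpace ℝ (Fin d),
        L v u = ∑ a, v a * L (EuclideanSpace.single a 1) u := by
      intro u
      conv_lhs => rw [hrep]
      rw [map_sum, ContinuousLinearMap.sum_apply]
      exact Finset.sum_congr rfl fun a _ => by
        rw [L.map_smul, ContinuousLinearMap.smul_apply, smul_eq_mul]
    calc L v v = ∑ a, v a * L (EuclideanSpace.single a 1) v := h2 v
      _ = ∑ a, v a * ∑ b, v b *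
            L (EuclideanSpace.single a 1) (EuclideanSpace.single b 1) :=
          Finset.sum_congr rfl fun a _ => by rw [h1]
      _ = ∑ j : Fin d, ∑ l : Fin d, v j * v l *
            L (EuclideanSpace.single l 1) (EuclideanSpace.single j 1) := by
          simp only [Finset.mul_sum]
          rw [Finset.sum_comm]
          exact Finset.sum_congr rfl fun j _ => Finset.sum_congr rfl fun l _ => by ring
  -- the ODE functions along the ray
  have hlineDeriv : ∀ t : ℝ, HasDerivAt (fun s : ℝ => s • v) v t := by
    intro t; simpa using (hasDerivAt_id t).smul_const v
  have hg1 : ∀ t : ℝ, HasDerivAt (fun s : ℝ => f (s • v)) (fderiv ℝ f (t • v) v) t :=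
    fun t => (hdiff (t • v)).hasFDerivAt.comp_hasDerivAt t (hlineDeriv t)
  have hg2 : ∀ t : ℝ, HasDerivAt (fun s : ℝ => fderiv ℝ f (s • v) v) (B (t • v) v v) t := by
    intro t
    have h1 : HasFDerivAt (fun y => fderiv ℝ f y v) ((B (t • v)).flip v) (t • v) := by
      have := (hdF (t • v)).hasFDerivAt.clm_apply (hasFDerivAt_const v (t • v))
      simpa [hB] using this
    exact h1.comp_hasDerivAt t (hlineDeriv t)
  have hcg1 : Continuous (fun t : ℝ => fderiv ℝ f (t • v) v) :=
    ((hf'.continuous.comp hcline).clm_apply continuous_const)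
  have hcg2 : Continuous (fun t : ℝ => B (t • v) v v) := hcD v v
  -- the integration by parts computation
  have hR1 : (0:ℝ) ≤ R + 1 := by linarith
  have hRlt : R < |R + 1| := by rw [abs_of_pos (by linarith)]; linarith
  have hIoi : (∫ t in Set.Ioi (0:ℝ), t * B (t • v) v v) = f 0 := by
    have hsplit : (∫ t in Set.Ioi (0:ℝ), t * B (t • v) v v)
        = ∫ t in Set.Ioc (0:ℝ) (R+1), t * B (t • v) v v := by
      rw [← Set.Ioc_union_Ioi_eq_Ioi hR1,
        setIntegral_union (Set.Ioc_disjoint_Ioi le_rfl) measurableSet_Ioi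
          ((hint v v).mono_set (Set.Ioc_subset_Ioi_self))
          ((hint v v).mono_set (Set.Ioi_subset_Ioi hR1))]
      have h0 : (∫ t in Set.Ioi (R+1), t * B (t • v) v v) = 0 := by
        apply setIntegral_eq_zero_of_forall_eq_zero
        intro t ht
        have : R < |t| := by
          rw [Set.mem_Ioi] at ht
          rw [abs_of_pos (by linarith)]; linarith
        rw [hout2 t this]; simp
      rw [h0, add_zero]
    rw [hsplit, ← intervalIntegral.integral_of_le hR1]
    have hibp := intervalIntegral.integral_mul_deriv_eq_deriv_mul
      (u := fun t : ℝ => t) (u' := fun _ : ℝ => (1:ℝ))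
      (v := fun t : ℝ => fderiv ℝ f (t • v) v) (v' := fun t : ℝ => B (t • v) v v)
      (a := 0) (b := R+1)
      (fun x _ => hasDerivAt_id x) (fun x _ => hg2 x)
      intervalIntegrable_const (hcg2.intervalIntegrable 0 (R+1))
    have hftc : (∫ x in (0:ℝ)..(R+1), fderiv ℝ f (x • v) v)
        = f ((R+1) • v) - f ((0:ℝ) • v) :=
      intervalIntegral.integral_eq_sub_of_hasDerivAt (fun x _ => hg1 x)
        (hcg1.intervalIntegrable 0 (R+1))
    rw [hibp]
    simp only [one_mul] at *
    rw [hftc, hout1 _ hRlt, houtf _ hRlt]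
    simp
  -- cancellation by symmetry
  have hIsymm : ∀ j l : Fin d,
      (∫ t in Set.Ioi (0:ℝ),
        t * B (t • v) (EuclideanSpace.single l 1) (EuclideanSpace.single j 1))
      = ∫ t in Set.Ioi (0:ℝ),
        t * B (t • v) (EuclideanSpace.single j 1) (EuclideanSpace.single l 1) := by
    intro j l
    have : (fun t : ℝ => t * B (t • v) (EuclideanSpace.single l 1) (EuclideanSpace.single j 1))
        = fun t : ℝ => t * B (t • v) (EuclideanSpace.single j 1) (EuclideanSpace.single l 1) :=
      funext fun t => by rw [hBsymm]
    rw [this]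
  calc ∑ j : Fin d, ∑ l : Fin d,
        (v j * v l * w k + v l * v k * w j - w l * v k * v j) *
        ∫ t in Set.Ioi (0:ℝ),
          t * B (t • v) (EuclideanSpace.single l 1) (EuclideanSpace.single j 1)
      = w k * ∑ j : Fin d, ∑ l : Fin d, v j * v l *
        ∫ t in Set.Ioi (0:ℝ),
          t * B (t • v) (EuclideanSpace.single l 1) (EuclideanSpace.single j 1) := by
        simp only [add_mul, sub_mul, Finset.sum_add_distrib, Finset.sum_sub_distrib,
          Finset.mul_sum]
        have h23 : ∑ j : Fin d, ∑ l : Fin d, w l * v k * v j *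
              (∫ t in Set.Ioi (0:ℝ),
                t * B (t • v) (EuclideanSpace.single l 1) (EuclideanSpace.single j 1))
            = ∑ j : Fin d, ∑ l : Fin d, v l * v k * w j *
              (∫ t in Set.Ioi (0:ℝ),
                t * B (t • v) (EuclideanSpace.single l 1) (EuclideanSpace.single j 1)) := by
          rw [Finset.sum_comm]
          exact Finset.sum_congr rfl fun j _ => Finset.sum_congr rfl fun l _ => by
            rw [hIsymm]; ring
        rw [h23, add_sub_cancel_right]
        exact Finset.sum_congr rfl fun j _ => Finset.sum_congr rfl fun l _ => by ring
    _ = w k * ∫ t in Set.Ioi (0:ℝ), t * B (t • v) v v := by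
        congr 1
        have h1 : ∀ j l : Fin d, v j * v l *
            (∫ t in Set.Ioi (0:ℝ),
              t * B (t • v) (EuclideanSpace.single l 1) (EuclideanSpace.single j 1))
            = ∫ t in Set.Ioi (0:ℝ), v j * v l *
              (t * B (t • v) (EuclideanSpace.single l 1) (EuclideanSpace.single j 1)) :=
          fun j l => (integral_const_mul _ _).symm
        simp only [h1]
        have h2 : ∀ j : Fin d, (∑ l : Fin d, ∫ t in Set.Ioi (0:ℝ), v j * v l *
              (t * B (t • v) (EuclideanSpace.single l 1) (EuclideanSpace.single j 1)))
            = ∫ t in Set.Ioi (0:ℝ), ∑ l : Fin d, v j * v l *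
              (t * B (t • v) (EuclideanSpace.single l 1) (EuclideanSpace.single j 1)) :=
          fun j => (integral_finset_sum Finset.univ
            (fun l _ => (hint (EuclideanSpace.single l 1) (EuclideanSpace.single j 1)).const_mul _)).symm
        simp only [h2]
        rw [← integral_finset_sum Finset.univ (fun j _ => integrable_finset_sum Finset.univ
          (fun l _ => (hint (EuclideanSpace.single l 1) (EuclideanSpace.single j 1)).const_mul _))]
        have hpt : (fun t : ℝ => ∑ j : Fin d, ∑ l : Fin d, v j * v l *
              (t * B (t • v) (EuclideanSpace.single l 1) (EuclideanSpace.single j 1)))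
            = fun t : ℝ => t * B (t • v) v v := by
          funext t
          rw [hLvv (B (t • v)), Finset.mul_sum]
          exact Finset.sum_congr rfl fun j _ => by
            rw [Finset.mul_sum]
            exact Finset.sum_congr rfl fun l _ => by ring
        rw [hpt]
    _ = w k * f 0 := by rw [hIoi]
end

section
/- Let d ≥ 1 and let γ: [0,∞) → ℝ^d be a smooth proper curve with γ(0) = y. For any vector field φ ∈ C_c^∞(ℝ^d; ℝ^d), writing ζ_{ij} = −(1/2)(∂_iφ_j + ∂_jφ_i) for the negative symmetrized gradient, one has the representation formula φ_k(y) = ∫_0^∞ (γ'(t)^j ∂_kζ_{ij}(γ(t)) − γ'(t)^j ∂_iζ_{jk}(γ(t)))(γ(t)^i − γ(0)^i) dt + ∫_0^∞ γ'(t)^i ζ_{ik}(γ(t)) dt. In particular, the symmetric-tensor-valued distribution L defined by pairing a symmetric test tensor ζ with this formula satisfies ∂_i L^{ij}_k applied to vector fields recovers evaluation at y: it is a fundamental solution of the symmetric divergence equation. -/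
open MeasureTheory Filter Set

private lemma euclid_sum_single {d : ℕ} (v : EuclideanSpace ℝ (Fin d)) :
    ∑ i, v i • (EuclideanSpace.single i (1:ℝ)) = v := by
  have h := (EuclideanSpace.basisFun (Fin d) ℝ).sum_repr v
  simpa [EuclideanSpace.basisFun_apply, EuclideanSpace.basisFun_repr] using h

private lemma clm_apply_sum {d : ℕ} (L : EuclideanSpace ℝ (Fin d) →L[ℝ] ℝ)
    (v : EuclideanSpace ℝ (Fin d)) :
    L v = ∑ i, v i * L (EuclideanSpace.single i 1) := by
  conv_lhs => rw [← euclid_sum_single v]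
  rw [map_sum]
  simp

private lemma fderiv_apply_const {d : ℕ} (φm : EuclideanSpace ℝ (Fin d) → ℝ)
    (hm : ContDiff ℝ (⊤ : ℕ∞) φm) (v w x : EuclideanSpace ℝ (Fin d)) :
    fderiv ℝ (fun y => fderiv ℝ φm y v) x w = fderiv ℝ (fderiv ℝ φm) x w v := by
  rw [fderiv_clm_apply (((hm.fderiv_right (m := (⊤ : ℕ∞)) (by simp)).differentiable (by simp)) x) (differentiableAt_const v)]
  simp

private lemma snd_symm {d : ℕ} (φm : EuclideanSpace ℝ (Fin d) → ℝ)
    (hm : ContDiff ℝ (⊤ : ℕ∞) φm) (v w x : EuclideanSpace ℝ (Fin d)) :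
    fderiv ℝ (fun y => fderiv ℝ φm y v) x w = fderiv ℝ (fun y => fderiv ℝ φm y w) x v := by
  rw [fderiv_apply_const _ hm, fderiv_apply_const _ hm]
  exact (hm.contDiffAt.isSymmSndFDerivAt (by rw [minSmoothness_of_isRCLikeNormedField]; show ((2 : ℕ∞) : WithTop ℕ∞) ≤ ((⊤ : ℕ∞) : WithTop ℕ∞); exact WithTop.coe_le_coe.mpr le_top)).eq w v

private noncomputable def eta {d : ℕ} (φ : EuclideanSpace ℝ (Fin d) → EuclideanSpace ℝ (Fin d))
    (i k : Fin d) : EuclideanSpace ℝ (Fin d) → ℝ := fun x =>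
  (1/2:ℝ) * (fderiv ℝ (fun z => φ z k) x (EuclideanSpace.single i 1)
    - fderiv ℝ (fun z => φ z i) x (EuclideanSpace.single k 1))

private lemma key_identity {d : ℕ} (φ : EuclideanSpace ℝ (Fin d) → EuclideanSpace ℝ (Fin d))
    (hφ : ContDiff ℝ (⊤ : ℕ∞) φ) (i j k : Fin d) (x : EuclideanSpace ℝ (Fin d)) :
    fderiv ℝ (fun x => -(1/2:ℝ) * (fderiv ℝ (fun z => φ z j) x (EuclideanSpace.single i 1)
          + fderiv ℝ (fun z => φ z i) x (EuclideanSpace.single j 1))) x (EuclideanSpace.single k 1)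
      - fderiv ℝ (fun x => -(1/2:ℝ) * (fderiv ℝ (fun z => φ z k) x (EuclideanSpace.single j 1)
          + fderiv ℝ (fun z => φ z j) x (EuclideanSpace.single k 1))) x (EuclideanSpace.single i 1)
      = fderiv ℝ (eta φ i k) x (EuclideanSpace.single j 1) := by
  have hm : ∀ m : Fin d, ContDiff ℝ (⊤ : ℕ∞) (fun z => φ z m) := fun m => contDiff_euclidean.mp hφ m
  have hD : ∀ m : Fin d, ContDiff ℝ (⊤ : ℕ∞) (fun y => fderiv ℝ (fun z => φ z m) y) :=
    fun m => (hm m).fderiv_right (by simp)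
  have hd : ∀ (m : Fin d) (v : EuclideanSpace ℝ (Fin d)) (x : EuclideanSpace ℝ (Fin d)),
      DifferentiableAt ℝ (fun y => fderiv ℝ (fun z => φ z m) y v) x := by
    intro m v x
    exact (((ContinuousLinearMap.apply ℝ ℝ v).contDiff.comp (hD m)).differentiable (by simp)) x
  show _ = fderiv ℝ (fun x => (1/2:ℝ) * (fderiv ℝ (fun z => φ z k) x (EuclideanSpace.single i 1)
          - fderiv ℝ (fun z => φ z i) x (EuclideanSpace.single k 1))) x (EuclideanSpace.single j 1)
  rw [fderiv_const_mul ((hd j _ x).fun_add (hd i _ x)), fderiv_const_mul ((hd k _ x).fun_add (hd j _ x)),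
      fderiv_const_mul ((hd k _ x).fun_sub (hd i _ x)), fderiv_fun_add (hd j _ x) (hd i _ x),
      fderiv_fun_add (hd k _ x) (hd j _ x), fderiv_fun_sub (hd k _ x) (hd i _ x)]
  simp only [ContinuousLinearMap.smul_apply, ContinuousLinearMap.add_apply,
    ContinuousLinearMap.sub_apply, smul_eq_mul]
  rw [snd_symm _ (hm j) (EuclideanSpace.single i 1) (EuclideanSpace.single k 1) x,
      snd_symm _ (hm k) (EuclideanSpace.single j 1) (EuclideanSpace.single i 1) x,
      snd_symm _ (hm i) (EuclideanSpace.single j 1) (EuclideanSpace.single k 1) x]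
  ring

private lemma integrableOn_Ioi_of_eventually_zero {g : ℝ → ℝ} (hg : Continuous g) (T : ℝ)
    (h : ∀ t, T ≤ t → g t = 0) : IntegrableOn g (Set.Ioi (0:ℝ)) := by
  have h1 : IntegrableOn g (Set.Ioc 0 T) := hg.integrableOn_Ioc
  have h2 : IntegrableOn g (Set.Ioi T) :=
    (integrableOn_zero).congr_fun (fun x hx => (h x (le_of_lt hx)).symm) measurableSet_Ioi
  refine (h1.union h2).mono_set ?_
  intro x hx
  rcases le_or_gt x T with h' | h'
  · exact Or.inl ⟨hx, h'⟩
  · exact Or.inr h'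

/-- Representation formula recovering a compactly supported vector field
from its (negative) symmetrized gradient `ζ_{ij} = −(1/2)(∂_iφ_j + ∂_jφ_i)` by integration
along a smooth proper curve `γ` with `γ(0) = y`:
`φ_k(y) = ∫_0^∞ (γ'^j ∂_kζ_{ij} − γ'^j ∂_iζ_{jk})(γ^i − y^i) dt + ∫_0^∞ γ'^i ζ_{ik} dt`.
This makes the associated symmetric-tensor-valued distribution `L` a fundamental solution
of the symmetric divergence equation. -/
theorem curve_symmetric_divergence_representation
    (d : ℕ) (hd : 1 ≤ d) (y : EuclideanSpace ℝ (Fin d))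
    (γ : ℝ → EuclideanSpace ℝ (Fin d)) (hγ : ContDiff ℝ (⊤ : ℕ∞) γ) (hγ0 : γ 0 = y)
    (hproper : Tendsto (fun t => ‖γ t‖) atTop atTop)
    (φ : EuclideanSpace ℝ (Fin d) → EuclideanSpace ℝ (Fin d))
    (hφ : ContDiff ℝ (⊤ : ℕ∞) φ) (hsupp : HasCompactSupport φ)
    (ζ : Fin d → Fin d → (EuclideanSpace ℝ (Fin d) → ℝ))
    (hζ : ζ = fun i j => fun x =>
      -(1/2 : ℝ) * (fderiv ℝ (fun z => φ z j) x (EuclideanSpace.single i 1)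
                    + fderiv ℝ (fun z => φ z i) x (EuclideanSpace.single j 1))) :
    ∀ k : Fin d,
      φ y k =
        (∫ t in Set.Ioi (0:ℝ), ∑ i : Fin d, ∑ j : Fin d,
          (deriv γ t j * fderiv ℝ (ζ i j) (γ t) (EuclideanSpace.single k 1)
            - deriv γ t j * fderiv ℝ (ζ j k) (γ t) (EuclideanSpace.single i 1))
          * (γ t i - y i))
        + ∫ t in Set.Ioi (0:ℝ), ∑ i : Fin d, deriv γ t i * ζ i k (γ t) := by
  intro k
  classical
  have hzf : ∀ i j : Fin d, ζ i j = fun x =>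
      -(1/2 : ℝ) * (fderiv ℝ (fun z => φ z j) x (EuclideanSpace.single i 1)
                    + fderiv ℝ (fun z => φ z i) x (EuclideanSpace.single j 1)) := by
    intro i j; rw [hζ]
  have hm : ∀ m : Fin d, ContDiff ℝ (⊤ : ℕ∞) (fun z => φ z m) := fun m => contDiff_euclidean.mp hφ m
  have hD : ∀ m : Fin d, ContDiff ℝ (⊤ : ℕ∞) (fun y => fderiv ℝ (fun z => φ z m) y) :=
    fun m => (hm m).fderiv_right (by simp)
  have happ : ∀ (m : Fin d) (v : EuclideanSpace ℝ (Fin d)),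
      ContDiff ℝ (⊤ : ℕ∞) (fun y => fderiv ℝ (fun z => φ z m) y v) :=
    fun m v => (ContinuousLinearMap.apply ℝ ℝ v).contDiff.comp (hD m)
  have hζsm : ∀ i j : Fin d, ContDiff ℝ (⊤ : ℕ∞) (ζ i j) := by
    intro i j; rw [hzf]
    exact contDiff_const.mul ((happ j _).add (happ i _))
  have hetasm : ∀ i : Fin d, ContDiff ℝ (⊤ : ℕ∞) (eta φ i k) := by
    intro i
    exact contDiff_const.mul ((happ k _).sub (happ i _))
  -- curve derivatives
  have hγd : ∀ t, HasDerivAt γ (deriv γ t) t := fun t => ((hγ.differentiable (by simp)) t).hasDerivAt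
  have hγi : ∀ (i : Fin d) (t : ℝ), HasDerivAt (fun s => γ s i) (deriv γ t i) t := by
    intro i t
    exact (EuclideanSpace.proj (𝕜 := ℝ) i).hasFDerivAt.comp_hasDerivAt t (hγd t)
  -- key identity in ζ form
  have hkey : ∀ (i j : Fin d) (x : EuclideanSpace ℝ (Fin d)),
      fderiv ℝ (ζ i j) x (EuclideanSpace.single k 1)
        - fderiv ℝ (ζ j k) x (EuclideanSpace.single i 1)
        = fderiv ℝ (eta φ i k) x (EuclideanSpace.single j 1) := by
    intro i j x
    rw [hzf i j, hzf j k]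
    exact key_identity φ hφ i j k x
  -- split of the gradient into eta minus zeta
  have hsplit : ∀ (i : Fin d) (x : EuclideanSpace ℝ (Fin d)),
      fderiv ℝ (fun z => φ z k) x (EuclideanSpace.single i 1) = eta φ i k x - ζ i k x := by
    intro i x
    rw [hzf i k]
    simp only [eta]
    ring
  -- the potential function
  set H : ℝ → ℝ := fun t => φ (γ t) k - ∑ i, eta φ i k (γ t) * (γ t i - y i) with hH
  set F1 : ℝ → ℝ := fun t => ∑ i : Fin d, ∑ j : Fin d,
      (deriv γ t j * fderiv ℝ (ζ i j) (γ t) (EuclideanSpace.single k 1)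
        - deriv γ t j * fderiv ℝ (ζ j k) (γ t) (EuclideanSpace.single i 1))
      * (γ t i - y i) with hF1
  set F2 : ℝ → ℝ := fun t => ∑ i : Fin d, deriv γ t i * ζ i k (γ t) with hF2
  -- derivative of H
  have hHderiv : ∀ t : ℝ, HasDerivAt H (-(F1 t + F2 t)) t := by
    intro t
    have h1 : HasDerivAt (fun s => φ (γ s) k) (fderiv ℝ (fun z => φ z k) (γ t) (deriv γ t)) t :=
      (((hm k).differentiable (by simp) (γ t)).hasFDerivAt).comp_hasDerivAt t (hγd t)
    have h2 : ∀ i : Fin d, HasDerivAt (fun s => eta φ i k (γ s) * (γ s i - y i))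
        (fderiv ℝ (eta φ i k) (γ t) (deriv γ t) * (γ t i - y i)
          + eta φ i k (γ t) * deriv γ t i) t := by
      intro i
      have hA : HasDerivAt (fun s => eta φ i k (γ s))
          (fderiv ℝ (eta φ i k) (γ t) (deriv γ t)) t :=
        (((hetasm i).differentiable (by simp) (γ t)).hasFDerivAt).comp_hasDerivAt t (hγd t)
      have hB : HasDerivAt (fun s => γ s i - y i) (deriv γ t i) t := (hγi i t).sub_const (y i)
      simpa using hA.fun_mul hB
    have hsum : HasDerivAt (fun s => ∑ i, eta φ i k (γ s) * (γ s i - y i))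
        (∑ i, (fderiv ℝ (eta φ i k) (γ t) (deriv γ t) * (γ t i - y i)
          + eta φ i k (γ t) * deriv γ t i)) t := HasDerivAt.fun_sum (fun i _ => h2 i)
    have hd0 := h1.sub hsum
    have heq : fderiv ℝ (fun z => φ z k) (γ t) (deriv γ t)
        - ∑ i, (fderiv ℝ (eta φ i k) (γ t) (deriv γ t) * (γ t i - y i)
          + eta φ i k (γ t) * deriv γ t i) = -(F1 t + F2 t) := by
      have ha : ∀ i : Fin d, (∑ j : Fin d,
          (deriv γ t j * fderiv ℝ (ζ i j) (γ t) (EuclideanSpace.single k 1)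
            - deriv γ t j * fderiv ℝ (ζ j k) (γ t) (EuclideanSpace.single i 1))
          * (γ t i - y i))
          = fderiv ℝ (eta φ i k) (γ t) (deriv γ t) * (γ t i - y i) := by
        intro i
        rw [← Finset.sum_mul]
        congr 1
        rw [clm_apply_sum (fderiv ℝ (eta φ i k) (γ t)) (deriv γ t)]
        refine Finset.sum_congr rfl (fun j _ => ?_)
        rw [← hkey i j (γ t)]
        ring
      have hb : fderiv ℝ (fun z => φ z k) (γ t) (deriv γ t)
          = ∑ i, deriv γ t i * (eta φ i k (γ t) - ζ i k (γ t)) := by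
        rw [clm_apply_sum (fderiv ℝ (fun z => φ z k) (γ t)) (deriv γ t)]
        exact Finset.sum_congr rfl (fun i _ => by rw [hsplit i (γ t)])
      rw [hF1]
      simp only
      rw [Finset.sum_congr rfl (fun i _ => ha i), hb, hF2]
      simp only
      rw [← Finset.sum_sub_distrib, ← Finset.sum_add_distrib, ← Finset.sum_neg_distrib]
      exact Finset.sum_congr rfl (fun i _ => by ring)
    rw [← heq]
    exact hd0
  -- support control
  set K : Set (EuclideanSpace ℝ (Fin d)) := tsupport φ with hKdef
  obtain ⟨R, hR⟩ := hsupp.isBounded.subset_closedBall 0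
  obtain ⟨T, hT⟩ := eventually_atTop.mp (hproper.eventually_gt_atTop R)
  have hout : ∀ t, T ≤ t → γ t ∉ K := by
    intro t ht hmem
    exact absurd (mem_closedBall_zero_iff.mp (hR hmem)) (not_le.mpr (hT t ht))
  have hsub : ∀ m : Fin d, tsupport (fun z => φ z m) ⊆ K := by
    intro m
    refine closure_mono ?_
    intro z hz
    simp only [Function.mem_support] at hz
    have : φ z ≠ 0 := fun h0 => hz (by rw [h0]; rfl)
    exact Function.mem_support.mpr this
  have hfdzero : ∀ (m : Fin d) (x : EuclideanSpace ℝ (Fin d)), x ∉ K →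
      fderiv ℝ (fun z => φ z m) x = 0 := by
    intro m x hx
    by_contra h
    exact hx (hsub m (support_fderiv_subset ℝ (Function.mem_support.mpr h)))
  have hzeta0 : ∀ (i j : Fin d) (x : EuclideanSpace ℝ (Fin d)), x ∉ K → ζ i j x = 0 := by
    intro i j x hx
    rw [hzf i j]
    simp [hfdzero j x hx, hfdzero i x hx]
  have heta0 : ∀ (i : Fin d) (x : EuclideanSpace ℝ (Fin d)), x ∉ K → eta φ i k x = 0 := by
    intro i x hx
    simp only [eta]
    simp [hfdzero k x hx, hfdzero i x hx]
  have hzsupp : ∀ i j : Fin d, tsupport (ζ i j) ⊆ K := by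
    intro i j
    refine closure_minimal ?_ (isClosed_tsupport φ)
    intro x hx
    by_contra h
    exact (Function.mem_support.mp hx) (hzeta0 i j x h)
  have hfd2zero : ∀ (i j : Fin d) (x : EuclideanSpace ℝ (Fin d)), x ∉ K →
      fderiv ℝ (ζ i j) x = 0 := by
    intro i j x hx
    by_contra h
    exact hx (hzsupp i j (tsupport_fderiv_subset ℝ (subset_closure (Function.mem_support.mpr h))))
  -- vanishing of the integrands and H for large times
  have hF1zero : ∀ t, T ≤ t → F1 t = 0 := by
    intro t ht
    rw [hF1]
    refine Finset.sum_eq_zero (fun i _ => Finset.sum_eq_zero (fun j _ => ?_))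
    rw [hfd2zero i j (γ t) (hout t ht), hfd2zero j k (γ t) (hout t ht)]
    simp
  have hF2zero : ∀ t, T ≤ t → F2 t = 0 := by
    intro t ht
    rw [hF2]
    refine Finset.sum_eq_zero (fun i _ => ?_)
    rw [hzeta0 i k (γ t) (hout t ht)]
    simp
  have hHzero : ∀ t, T ≤ t → H t = 0 := by
    intro t ht
    rw [hH]
    simp only
    rw [image_eq_zero_of_notMem_tsupport (hout t ht)]
    rw [Finset.sum_eq_zero (fun i _ => by rw [heta0 i (γ t) (hout t ht)]; ring)]
    simp
  have hTend : Tendsto H atTop (nhds 0) :=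
    tendsto_const_nhds.congr' (eventually_atTop.mpr ⟨T, fun t ht => (hHzero t ht).symm⟩)
  -- continuity and integrability of the integrands
  have hγc : Continuous γ := hγ.continuous
  have hgc : Continuous (deriv γ) := hγ.continuous_deriv (by simp)
  have hprojc : ∀ i : Fin d, Continuous (fun v : EuclideanSpace ℝ (Fin d) => v i) :=
    fun i => (EuclideanSpace.proj (𝕜 := ℝ) i).continuous
  have hfdc : ∀ (i j : Fin d) (v : EuclideanSpace ℝ (Fin d)),
      Continuous (fun t => fderiv ℝ (ζ i j) (γ t) v) := by
    intro i j v
    exact (ContinuousLinearMap.apply ℝ ℝ v).continuous.comp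
      (((((hζsm i j).fderiv_right (m := (⊤ : ℕ∞)) (by simp))).continuous).comp hγc)
  have hF1c : Continuous F1 := by
    rw [hF1]
    refine continuous_finset_sum _ (fun i _ => continuous_finset_sum _ (fun j _ => ?_))
    exact ((((hprojc j).comp hgc).mul (hfdc i j _)).sub
      (((hprojc j).comp hgc).mul (hfdc j k _))).mul
      (((hprojc i).comp hγc).sub continuous_const)
  have hF2c : Continuous F2 := by
    rw [hF2]
    refine continuous_finset_sum _ (fun i _ => ?_)
    exact ((hprojc i).comp hgc).mul ((hζsm i k).continuous.comp hγc)
  have hF1int : IntegrableOn F1 (Set.Ioi (0:ℝ)) :=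
    integrableOn_Ioi_of_eventually_zero hF1c T hF1zero
  have hF2int : IntegrableOn F2 (Set.Ioi (0:ℝ)) :=
    integrableOn_Ioi_of_eventually_zero hF2c T hF2zero
  -- fundamental theorem of calculus on [0, ∞)
  have hint := integral_Ioi_of_hasDerivAt_of_tendsto' (f := H)
    (f' := fun t => -(F1 t + F2 t)) (a := 0)
    (fun t _ => hHderiv t) ((hF1int.add hF2int).neg) hTend
  have hH0 : H 0 = φ y k := by
    rw [hH]
    simp only [hγ0]
    rw [Finset.sum_eq_zero (fun i _ => by rw [sub_self, mul_zero])]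
    ring
  rw [MeasureTheory.integral_neg, MeasureTheory.integral_add hF1int hF2int, hH0, zero_sub] at hint
  have := neg_injective hint
  linarith [this]
end
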